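/- arXiv:2509.16133 — 2 statements merged into one kernel-verified Lean document; each statement's English description precedes it below -/
import Mathlib

section
/- (Twinning.) Let K_B be an (N+1)×(N+1) similarity matrix such that its last row duplicates row i for some i ≤ N, i.e., (K_B)_{i,N+1} = 1 (so, by positive semidefiniteness and unit diagonal, (K_B)_{N+1,j} = (K_B)_{i,j} for all j). Let p_B be a probability vector in ℝ^{N+1}, let K_A be the top-left N×N block of K_B, and let p_A ∈ ℝ^N be obtained from p_B by merging the twin's abundance into member i: (p_A)_j = (p_B)_j for j ≠ i and (p_A)_i = (p_B)_i + (p_B)_{N+1}. Then pVS(K_A, p_A, q) ≥ pVS(K_B, p_B, q) for every order q ≥ 0. -/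
open Matrix Finset Real

/-- A similarity matrix: real symmetric positive semidefinite with unit diagonal. -/
def IsSimilarityMatrix {n : Type*} [Fintype n] (K : Matrix n n ℝ) : Prop :=
  K.PosSemidef ∧ ∀ i, K i i = 1

/-- A probability vector: nonnegative entries summing to one. -/
def IsProbVec {n : Type*} [Fintype n] (p : n → ℝ) : Prop :=
  (∀ i, 0 ≤ p i) ∧ ∑ i, p i = 1

/-- The abundance-weighted similarity matrix `K_p = diag(√p) ⬝ K ⬝ diag(√p)`. -/
noncomputable def weightedK {n : Type*} [Fintype n] [DecidableEq n]
    (K : Matrix n n ℝ) (p : n → ℝ) : Matrix n n ℝ :=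
  Matrix.diagonal (fun i => Real.sqrt (p i)) * K * Matrix.diagonal (fun i => Real.sqrt (p i))

theorem weightedK_isHermitian {n : Type*} [Fintype n] [DecidableEq n]
    {K : Matrix n n ℝ} (hK : K.IsHermitian) (p : n → ℝ) :
    (weightedK K p).IsHermitian := by
  have h := Matrix.isHermitian_mul_mul_conjTranspose (Matrix.diagonal fun i => Real.sqrt (p i)) hK
  simpa [weightedK, Matrix.diagonal_conjTranspose] using h

/-- The probability-weighted Vendi Score of order `q`, defined as the exponential of the
Rényi entropy of order `q` of the eigenvalues of the abundance-weighted similarity matrix,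
with the conventions `0 ^ 0 = 0` and `0 * log 0 = 0`. -/
noncomputable def pVS {n : Type*} [Fintype n] [DecidableEq n]
    (K : Matrix n n ℝ) (p : n → ℝ) (q : ℝ) (hK : K.IsHermitian) : ℝ :=
  if q = 1 then
    Real.exp (- ∑ i, (weightedK_isHermitian hK p).eigenvalues i *
      Real.log ((weightedK_isHermitian hK p).eigenvalues i))
  else
    (∑ i ∈ Finset.univ.filter (fun i => (weightedK_isHermitian hK p).eigenvalues i ≠ 0),
      (weightedK_isHermitian hK p).eigenvalues i ^ q) ^ (1 / (1 - q))

section AuxCharpoly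
open Polynomial

lemma aux_sum_single {n : Type*} [Fintype n] [DecidableEq n] (x : n) (f : n → ℝ)
    (hf : ∀ k, k ≠ x → f k = 0) : ∑ k, f k = f x :=
  Finset.sum_eq_single_of_mem x (Finset.mem_univ x) (fun k _ hk => hf k hk)

lemma aux_sum_pair {n : Type*} [Fintype n] [DecidableEq n] {x y : n} (hxy : x ≠ y) (f : n → ℝ)
    (hf : ∀ k, k ≠ x → k ≠ y → f k = 0) : ∑ k, f k = f x + f y := by
  rw [← Finset.sum_subset (Finset.subset_univ {x, y})
    (fun k _ hk => hf k (fun h => hk (by simp [h])) (fun h => hk (by simp [h])))]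
  rw [Finset.sum_pair hxy]

lemma aux_charpoly_conj {n : Type*} [Fintype n] [DecidableEq n]
    (U M : Matrix n n ℝ) (hU : U * Uᵀ = 1) :
    (U * M * Uᵀ).charpoly = M.charpoly := by
  have hcm : ∀ (A : Matrix n n ℝ), charmatrix A
      = (X : ℝ[X]) • (1 : Matrix n n ℝ[X]) - A.map C := by
    intro A; ext j k
    rw [charmatrix_apply]
    rcases eq_or_ne j k with h | h
    · subst h; simp [Matrix.diagonal_apply_eq]
    · simp [Matrix.diagonal_apply_ne _ h, Matrix.one_apply_ne h]
  have key : charmatrix (U * M * Uᵀ) = U.map C * charmatrix M * Uᵀ.map C := by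
    rw [hcm, hcm, Matrix.mul_sub, Matrix.sub_mul, ← Matrix.map_mul, ← Matrix.map_mul]
    congr 1
    rw [Matrix.mul_smul, Matrix.mul_one, Matrix.smul_mul, ← Matrix.map_mul, hU]
    simp
  have hdet1 : (U.map (C : ℝ →+* ℝ[X])).det * (Uᵀ.map (C : ℝ →+* ℝ[X])).det = 1 := by
    rw [← Matrix.det_mul, ← Matrix.map_mul, hU]
    simp
  unfold Matrix.charpoly
  rw [key, Matrix.det_mul, Matrix.det_mul, mul_comm, ← mul_assoc, mul_comm ((Uᵀ.map _).det),
    hdet1, one_mul]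

lemma aux_charpoly_diagonal {n : Type*} [Fintype n] [DecidableEq n] (d : n → ℝ) :
    (Matrix.diagonal d).charpoly = ∏ j, (X - C (d j)) := by
  unfold Matrix.charpoly
  have : charmatrix (Matrix.diagonal d) = Matrix.diagonal (fun j => (X : ℝ[X]) - C (d j)) := by
    ext j k
    rcases eq_or_ne j k with h | h
    · subst h; simp [charmatrix_apply_eq, Matrix.diagonal_apply_eq]
    · rw [charmatrix_apply_ne _ _ _ h, Matrix.diagonal_apply_ne _ h, Matrix.diagonal_apply_ne _ h]
      simp
  rw [this, Matrix.det_diagonal]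

lemma aux_charpoly_eq_prod {n : Type*} [Fintype n] [DecidableEq n]
    {A : Matrix n n ℝ} (hA : A.IsHermitian) :
    A.charpoly = ∏ j, (X - C (hA.eigenvalues j)) := by
  have hspec := hA.spectral_theorem
  have hU : (hA.eigenvectorUnitary : Matrix n n ℝ) * (hA.eigenvectorUnitary : Matrix n n ℝ)ᵀ
      = 1 := by
    have := (Matrix.mem_unitaryGroup_iff).mp hA.eigenvectorUnitary.2
    simpa [Matrix.star_eq_conjTranspose, Matrix.conjTranspose_eq_transpose_of_trivial] using this
  have hd : Matrix.diagonal (RCLike.ofReal ∘ hA.eigenvalues) = Matrix.diagonal hA.eigenvalues := by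
    congr 1
  have hA_eq : A = (hA.eigenvectorUnitary : Matrix n n ℝ) * Matrix.diagonal hA.eigenvalues *
      (hA.eigenvectorUnitary : Matrix n n ℝ)ᵀ := by
    simpa [hd, Matrix.star_eq_conjTranspose,
      Matrix.conjTranspose_eq_transpose_of_trivial] using hspec
  rw [show A.charpoly = ((hA.eigenvectorUnitary : Matrix n n ℝ) * Matrix.diagonal hA.eigenvalues *
      (hA.eigenvectorUnitary : Matrix n n ℝ)ᵀ).charpoly from by rw [← hA_eq],
    aux_charpoly_conj _ _ hU, aux_charpoly_diagonal]

lemma aux_prod_eq {n : Type*} [Fintype n] (f : n → ℝ) :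
    ∏ j, ((X : ℝ[X]) - C (f j))
      = ((Finset.univ.val.map f).map (fun a => (X : ℝ[X]) - C a)).prod := by
  rw [Multiset.map_map]; rfl

lemma aux_roots_step {n m : Type*} [Fintype n] [Fintype m]
    (f : n → ℝ) (g : m → ℝ)
    (h : ((Finset.univ.val.map f).map (fun a => (X : ℝ[X]) - C a)).prod
      = X * ((Finset.univ.val.map g).map (fun a => (X : ℝ[X]) - C a)).prod) :
    Finset.univ.val.map f = 0 ::ₘ Finset.univ.val.map g := by
  have hq : (((Finset.univ.val.map g).map (fun a => (X : ℝ[X]) - C a)).prod).Monic :=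
    Polynomial.monic_multiset_prod_of_monic (Finset.univ.val.map g) (fun a => X - C a)
      (fun a _ => Polynomial.monic_X_sub_C a)
  have hne : (X : ℝ[X]) * ((Finset.univ.val.map g).map (fun a => (X : ℝ[X]) - C a)).prod ≠ 0 :=
    mul_ne_zero Polynomial.X_ne_zero hq.ne_zero
  have hr := congrArg Polynomial.roots h
  rw [Polynomial.roots_multiset_prod_X_sub_C, Polynomial.roots_mul hne, Polynomial.roots_X,
    Polynomial.roots_multiset_prod_X_sub_C, Multiset.singleton_add] at hr
  exact hr

lemma aux_sum_transfer {n m : Type*} [Fintype n] [Fintype m]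
    (f : n → ℝ) (g : m → ℝ)
    (hms : Finset.univ.val.map f = 0 ::ₘ Finset.univ.val.map g)
    (φ : ℝ → ℝ) (hφ : φ 0 = 0) :
    ∑ j, φ (f j) = ∑ j, φ (g j) := by
  have h1 : ∑ j, φ (f j) = ((Finset.univ.val.map f).map φ).sum := by
    rw [Multiset.map_map]; rfl
  have h2 : ∑ j, φ (g j) = ((Finset.univ.val.map g).map φ).sum := by
    rw [Multiset.map_map]; rfl
  rw [h1, h2, hms, Multiset.map_cons, Multiset.sum_cons, hφ, zero_add]

end AuxCharpoly

section TwinAux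
open Polynomial

variable {N : ℕ}

/-- The merge map sending the twin index `last` to `i`. -/
def twinR (i : Fin N) : Fin (N + 1) → Fin N :=
  fun j => if h : j = Fin.last N then i else j.castPred h

/-- Orthogonal matrix acting on the plane spanned by coordinates `i.castSucc` and `last`. -/
def twinU (i : Fin N) (c d e : ℝ) : Matrix (Fin (N + 1)) (Fin (N + 1)) ℝ :=
  Matrix.of fun j k =>
    if j = i.castSucc then (if k = i.castSucc then c else if k = Fin.last N then d else 0)
    else if j = Fin.last N then (if k = i.castSucc then d else if k = Fin.last N then e else 0)
    else if k = j then 1 else 0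

/-- The inclusion `Fin N → Fin (N+1)` as a rectangular matrix. -/
def twinP : Matrix (Fin (N + 1)) (Fin N) ℝ :=
  Matrix.of fun j k => if j = k.castSucc then 1 else 0

/-- The merge matrix. -/
def twinT (i : Fin N) : Matrix (Fin (N + 1)) (Fin N) ℝ :=
  Matrix.of fun j k => if k = twinR i j then 1 else 0

lemma ci_ne_last (i : Fin N) : i.castSucc ≠ Fin.last N := (Fin.castSucc_lt_last i).ne

lemma twinR_castSucc (i k : Fin N) : twinR i k.castSucc = k := by
  simp [twinR, ci_ne_last k, Fin.castPred_castSucc]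

lemma twinR_ci (i : Fin N) : twinR i i.castSucc = i := twinR_castSucc i i

lemma twinR_last (i : Fin N) : twinR i (Fin.last N) = i := by simp [twinR]

lemma twinU_mul_transpose (i : Fin N) (c d e : ℝ)
    (h1 : c * c + d * d = 1) (h2 : c * d + d * e = 0) (h3 : d * d + e * e = 1) :
    twinU i c d e * (twinU i c d e)ᵀ = 1 := by
  have hne := ci_ne_last i
  ext j l
  rw [Matrix.mul_apply]
  simp only [Matrix.transpose_apply]
  by_cases hj : j = i.castSucc
  · subst hj
    rw [aux_sum_pair hne _ (fun k hk1 hk2 => by simp [twinU, hk1, hk2])]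
    by_cases hl : l = i.castSucc
    · subst hl; simp [twinU, hne, hne.symm, Matrix.one_apply, h1]
    · by_cases hl2 : l = Fin.last N
      · subst hl2; simp [twinU, hne, hne.symm, Matrix.one_apply, h2]
      · simp [twinU, hne, hne.symm, hl, hl2, Ne.symm hl, Ne.symm hl2, Matrix.one_apply]
  · by_cases hj2 : j = Fin.last N
    · subst hj2
      rw [aux_sum_pair hne _ (fun k hk1 hk2 => by simp [twinU, hne.symm, hk1, hk2])]
      by_cases hl : l = i.castSucc
      · subst hl; simp [twinU, hne, hne.symm, Matrix.one_apply]; linarith [h2]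
      · by_cases hl2 : l = Fin.last N
        · subst hl2; simp [twinU, hne, hne.symm, Matrix.one_apply, h3]
        · simp [twinU, hne, hne.symm, hl, hl2, Ne.symm hl, Ne.symm hl2, Matrix.one_apply]
    · rw [aux_sum_single j _ (fun k hk => by simp [twinU, hj, hj2, hk])]
      by_cases hl : l = i.castSucc
      · subst hl; simp [twinU, hj, hj2, Matrix.one_apply, Ne.symm hj]
      · by_cases hl2 : l = Fin.last N
        · subst hl2; simp [twinU, hj, hj2, Matrix.one_apply, Ne.symm hj2]
        · simp [twinU, hj, hj2, hl, hl2, Matrix.one_apply, eq_comm]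

lemma twinU_mul_P (i : Fin N) (c d e : ℝ) :
    twinU i c d e * (twinP (N := N)) = Matrix.of (fun j k => twinU i c d e j k.castSucc) := by
  ext j k
  rw [Matrix.mul_apply]
  rw [aux_sum_single k.castSucc _ (fun m hm => by simp [twinP, hm])]
  simp [twinP]

lemma twinT_conj (i : Fin N) (KB : Matrix (Fin (N + 1)) (Fin (N + 1)) ℝ)
    (hr : ∀ j l, KB j l = KB ((twinR i j).castSucc) ((twinR i l).castSucc)) :
    twinT i * (KB.submatrix Fin.castSucc Fin.castSucc) * (twinT i)ᵀ = KB := by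
  have hTmul : ∀ (M : Matrix (Fin N) (Fin N) ℝ) (j : Fin (N + 1)) (m : Fin N),
      (twinT i * M) j m = M (twinR i j) m := by
    intro M j m
    rw [Matrix.mul_apply]
    rw [aux_sum_single (twinR i j) _ (fun k hk => by simp [twinT, hk])]
    simp [twinT]
  ext j l
  rw [Matrix.mul_apply]
  simp only [Matrix.transpose_apply, hTmul]
  rw [aux_sum_single (twinR i l) _ (fun m hm => by simp [twinT, hm])]
  simp [twinT]
  exact (hr j l).symm

lemma twinP_conj (W : Matrix (Fin N) (Fin N) ℝ) :
    (twinP (N := N)) * W * (twinP (N := N))ᵀ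
      = (Matrix.fromBlocks W 0 0 (0 : Matrix (Fin 1) (Fin 1) ℝ)).submatrix
          finSumFinEquiv.symm finSumFinEquiv.symm := by
  have hcs : ∀ (j : Fin N), finSumFinEquiv.symm j.castSucc = Sum.inl j := fun j =>
    finSumFinEquiv_symm_apply_castAdd j
  have hPmul : ∀ (M : Matrix (Fin N) (Fin N) ℝ) (j' : Fin N) (m : Fin N),
      (((twinP (N := N)) * M : Matrix (Fin (N + 1)) (Fin N) ℝ)) j'.castSucc m = M j' m := by
    intro M j' m
    rw [Matrix.mul_apply]
    rw [aux_sum_single j' _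
      (fun k hk => by
        have hj' : j'.castSucc ≠ k.castSucc := fun h => hk (Fin.castSucc_injective N h).symm
        simp [twinP, hj'])]
    simp [twinP]
  have hPlast : ∀ (M : Matrix (Fin N) (Fin N) ℝ) (m : Fin N),
      (((twinP (N := N)) * M : Matrix (Fin (N + 1)) (Fin N) ℝ)) (Fin.last N) m = 0 := by
    intro M m
    rw [Matrix.mul_apply]
    exact Finset.sum_eq_zero (fun k _ => by simp [twinP, (ci_ne_last k).symm])
  ext j l
  rw [Matrix.mul_apply]
  simp only [Matrix.transpose_apply, Matrix.submatrix_apply]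
  by_cases hj : j = Fin.last N
  · subst hj
    rw [Finset.sum_eq_zero (fun m _ => by rw [hPlast, zero_mul])]
    rw [finSumFinEquiv_symm_last]
    rcases h : finSumFinEquiv.symm l with l' | l'
    · simp
    · simp
  · obtain ⟨j', rfl⟩ : ∃ j', j = j'.castSucc :=
      ⟨j.castPred hj, (Fin.castSucc_castPred j hj).symm⟩
    rw [Finset.sum_congr rfl (fun m _ => by rw [hPmul])]
    by_cases hl : l = Fin.last N
    · subst hl
      rw [Finset.sum_eq_zero (fun m _ => by simp [twinP, (ci_ne_last m).symm])]
      rw [finSumFinEquiv_symm_last, hcs]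
      simp
    · obtain ⟨l', rfl⟩ : ∃ l', l = l'.castSucc :=
        ⟨l.castPred hl, (Fin.castSucc_castPred l hl).symm⟩
      rw [aux_sum_single l' _
        (fun m hm => by
          have hl' : l'.castSucc ≠ m.castSucc := fun h => hm (Fin.castSucc_injective N h).symm
          simp [twinP, hl'])]
      rw [hcs, hcs]
      simp [twinP]

lemma twinV_eq (i : Fin N) (c d e : ℝ) (pA : Fin N → ℝ) (pB : Fin (N + 1) → ℝ)
    (hci : c * Real.sqrt (pA i) = Real.sqrt (pB i.castSucc))
    (hdi : d * Real.sqrt (pA i) = Real.sqrt (pB (Fin.last N)))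
    (hk : ∀ k, k ≠ i → pA k = pB k.castSucc) :
    (Matrix.of (fun j k => twinU i c d e j k.castSucc) : Matrix (Fin (N + 1)) (Fin N) ℝ)
        * Matrix.diagonal (fun k => Real.sqrt (pA k))
      = Matrix.diagonal (fun j => Real.sqrt (pB j)) * twinT i := by
  have hne := ci_ne_last i
  ext j k
  rw [Matrix.mul_diagonal, Matrix.diagonal_mul]
  by_cases hj : j = i.castSucc
  · subst hj
    by_cases hkk : k = i
    · subst hkk
      simp [twinU, twinT, twinR_ci, hne, hci]
    · simp [twinU, twinT, twinR_ci, hne, hkk, ci_ne_last k,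
        fun h : k.castSucc = i.castSucc => hkk (Fin.castSucc_injective N h)]
  · by_cases hj2 : j = Fin.last N
    · subst hj2
      by_cases hkk : k = i
      · subst hkk
        simp [twinU, twinT, twinR_last, hne, hne.symm, hdi]
      · simp [twinU, twinT, twinR_last, hne, hne.symm, hkk, ci_ne_last k,
          fun h : k.castSucc = i.castSucc => hkk (Fin.castSucc_injective N h)]
    · by_cases hkk : k.castSucc = j
      · have hki : k ≠ i := fun h => hj (by rw [← hkk, h])
        have hrj : twinR i j = k := by rw [← hkk, twinR_castSucc]
        have e1 : twinU i c d e j k.castSucc = 1 := by simp [twinU, hj, hj2, hkk]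
        have e2 : twinT i j k = 1 := by simp [twinT, hrj]
        simp only [Matrix.of_apply]
        rw [e1, e2, one_mul, mul_one, hk k hki, hkk]
      · have hrj : twinR i j ≠ k := by
          intro h
          exact hkk (by rw [← h, twinR, dif_neg hj2, Fin.castSucc_castPred])
        simp [twinU, twinT, hj, hj2, hkk, Ne.symm hrj]

end TwinAux

section Master
open Polynomial

lemma twin_charpoly {N : ℕ} (KB : Matrix (Fin (N + 1)) (Fin (N + 1)) ℝ)
    (i : Fin N) (pA : Fin N → ℝ) (pB : Fin (N + 1) → ℝ) (c d e : ℝ)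
    (h1 : c * c + d * d = 1) (h2 : c * d + d * e = 0) (h3 : d * d + e * e = 1)
    (hci : c * Real.sqrt (pA i) = Real.sqrt (pB i.castSucc))
    (hdi : d * Real.sqrt (pA i) = Real.sqrt (pB (Fin.last N)))
    (hk : ∀ k, k ≠ i → pA k = pB k.castSucc)
    (hr : ∀ j l, KB j l = KB ((twinR i j).castSucc) ((twinR i l).castSucc)) :
    (weightedK KB pB).charpoly
      = X * (weightedK (KB.submatrix Fin.castSucc Fin.castSucc) pA).charpoly := by
  set KA := KB.submatrix Fin.castSucc Fin.castSucc with hKA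
  set WA := weightedK KA pA with hWA
  set U := twinU i c d e with hU
  set V : Matrix (Fin (N + 1)) (Fin N) ℝ := Matrix.of (fun j k => U j k.castSucc) with hVdef
  set DA : Matrix (Fin N) (Fin N) ℝ := Matrix.diagonal (fun k => Real.sqrt (pA k)) with hDA
  set DB : Matrix (Fin (N + 1)) (Fin (N + 1)) ℝ :=
    Matrix.diagonal (fun j => Real.sqrt (pB j)) with hDB
  have hUUt : U * Uᵀ = 1 := twinU_mul_transpose i c d e h1 h2 h3
  have hUP : U * (twinP (N := N)) = V := twinU_mul_P i c d e
  have hV : V * DA = DB * twinT i := twinV_eq i c d e pA pB hci hdi hk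
  have hT : twinT i * KA * (twinT i)ᵀ = KB := twinT_conj i KB hr
  have hWB : weightedK KB pB = V * WA * Vᵀ := by
    have hDAt : DAᵀ = DA := Matrix.diagonal_transpose _
    have hDBt : DBᵀ = DB := Matrix.diagonal_transpose _
    calc weightedK KB pB = DB * KB * DB := rfl
      _ = DB * (twinT i * KA * (twinT i)ᵀ) * DB := by rw [hT]
      _ = (DB * twinT i) * KA * (DB * twinT i)ᵀ := by
          rw [Matrix.transpose_mul, hDBt]
          simp only [Matrix.mul_assoc]
      _ = (V * DA) * KA * (V * DA)ᵀ := by rw [hV]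
      _ = V * (DA * KA * DA) * Vᵀ := by
          rw [Matrix.transpose_mul, hDAt]
          simp only [Matrix.mul_assoc]
      _ = V * WA * Vᵀ := rfl
  have hstep : weightedK KB pB = U * ((twinP (N := N)) * WA * (twinP (N := N))ᵀ) * Uᵀ := by
    rw [hWB, ← hUP, Matrix.transpose_mul]
    simp only [Matrix.mul_assoc]
  have hzero1 : (0 : Matrix (Fin 1) (Fin 1) ℝ).charpoly = X := by
    rw [Matrix.charpoly, Matrix.det_fin_one]
    simp [charmatrix_apply_eq]
  rw [hstep, aux_charpoly_conj _ _ hUUt, twinP_conj,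
    show (Matrix.fromBlocks WA 0 0 (0 : Matrix (Fin 1) (Fin 1) ℝ)).submatrix
        ⇑finSumFinEquiv.symm ⇑finSumFinEquiv.symm
      = Matrix.reindex finSumFinEquiv finSumFinEquiv
          (Matrix.fromBlocks WA 0 0 (0 : Matrix (Fin 1) (Fin 1) ℝ)) from rfl,
    Matrix.charpoly_reindex, Matrix.charpoly_fromBlocks_zero₂₁, hzero1, mul_comm]

end Master

/-- Twinning: merging a twin (a member functionally identical to member `i`)
into member `i` does not decrease the probability-weighted Vendi Score. -/
theorem pVS_twinning {N : ℕ}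
    (KB : Matrix (Fin (N + 1)) (Fin (N + 1)) ℝ) (hKB : IsSimilarityMatrix KB)
    (pB : Fin (N + 1) → ℝ) (hpB : IsProbVec pB)
    (i : Fin N) (htwin : KB i.castSucc (Fin.last N) = 1)
    (q : ℝ) (hq : 0 ≤ q) :
    pVS KB pB q hKB.1.1 ≤
      pVS (KB.submatrix Fin.castSucc Fin.castSucc)
        (fun j => if j = i then pB i.castSucc + pB (Fin.last N) else pB j.castSucc)
        q (hKB.1.1.submatrix Fin.castSucc) := by
  have hpsd : KB.PosSemidef := hKB.1
  have hdiag := hKB.2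
  have hherm : KB.IsHermitian := hpsd.1
  have hsym : ∀ j k, KB j k = KB k j := by
    intro j k
    conv_lhs => rw [← hherm]
    simp [Matrix.conjTranspose_apply]
  have hne := ci_ne_last i
  have hlastci : KB (Fin.last N) i.castSucc = 1 := by rw [hsym]; exact htwin
  have hx : KB *ᵥ (Pi.single i.castSucc 1 - Pi.single (Fin.last N) 1) = 0 := by
    apply (hpsd.dotProduct_mulVec_zero_iff _).mp
    simp only [star_trivial, Matrix.mulVec_sub, Matrix.mulVec_single_one, Matrix.col_apply, sub_dotProduct,
      single_dotProduct, Pi.sub_apply, mul_one, one_mul]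
    rw [hdiag, hdiag (Fin.last N), htwin, hlastci]
    ring
  have hcol : ∀ j, KB j i.castSucc = KB j (Fin.last N) := by
    intro j
    have h := congrFun hx j
    simp only [Matrix.mulVec_sub, Matrix.mulVec_single_one, Matrix.col_apply, Pi.sub_apply, mul_one,
      Pi.zero_apply] at h
    linarith
  have hr : ∀ j l, KB j l = KB ((twinR i j).castSucc) ((twinR i l).castSucc) := by
    have h1 : ∀ j l, KB j ((twinR i l).castSucc) = KB j l := by
      intro j l
      by_cases hl : l = Fin.last N
      · subst hl; rw [twinR_last]; exact (hcol j).symm ▸ (hcol j)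
      · rw [twinR, dif_neg hl, Fin.castSucc_castPred]
    have h2 : ∀ j l, KB ((twinR i j).castSucc) l = KB j l := by
      intro j l; rw [hsym, h1, hsym]
    intro j l
    rw [h1, h2]
  set pA : Fin N → ℝ :=
    fun j => if j = i then pB i.castSucc + pB (Fin.last N) else pB j.castSucc with hpAdef
  have hpAi : pA i = pB i.castSucc + pB (Fin.last N) := if_pos rfl
  have hpAk : ∀ k, k ≠ i → pA k = pB k.castSucc := fun k hk => if_neg hk
  have hchar : (weightedK KB pB).charpoly
      = Polynomial.X * (weightedK (KB.submatrix Fin.castSucc Fin.castSucc) pA).charpoly := by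
    by_cases hb : pB (Fin.last N) = 0
    · refine twin_charpoly KB i pA pB 1 0 1 (by norm_num) (by norm_num) (by norm_num) ?_ ?_
        hpAk hr
      · rw [hpAi, hb, add_zero, one_mul]
      · rw [hb, zero_mul, Real.sqrt_zero]
    · have ha := hpB.1 i.castSucc
      have hb0 := hpB.1 (Fin.last N)
      have hbpos : 0 < pB (Fin.last N) := lt_of_le_of_ne hb0 (Ne.symm hb)
      have hs : 0 < pA i := by rw [hpAi]; linarith
      have hsA : Real.sqrt (pA i) ≠ 0 := (Real.sqrt_pos.mpr hs).ne'
      set c : ℝ := Real.sqrt (pB i.castSucc) / Real.sqrt (pA i) with hc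
      set d : ℝ := Real.sqrt (pB (Fin.last N)) / Real.sqrt (pA i) with hd
      have hci : c * Real.sqrt (pA i) = Real.sqrt (pB i.castSucc) := div_mul_cancel₀ _ hsA
      have hdi : d * Real.sqrt (pA i) = Real.sqrt (pB (Fin.last N)) := div_mul_cancel₀ _ hsA
      have h1 : c * c + d * d = 1 := by
        rw [hc, hd]
        rw [div_mul_div_comm, div_mul_div_comm, Real.mul_self_sqrt ha,
          Real.mul_self_sqrt hb0, Real.mul_self_sqrt hs.le, ← add_div, hpAi]
        exact div_self (by rw [← hpAi]; exact hs.ne')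
      refine twin_charpoly KB i pA pB c d (-c) h1 (by ring) (by nlinarith [h1]) hci hdi hpAk hr
  have hms : Finset.univ.val.map ((weightedK_isHermitian hKB.1.1 pB).eigenvalues)
      = 0 ::ₘ Finset.univ.val.map
          ((weightedK_isHermitian (hKB.1.1.submatrix Fin.castSucc) pA).eigenvalues) := by
    apply aux_roots_step
    rw [← aux_prod_eq, ← aux_prod_eq,
      ← aux_charpoly_eq_prod (weightedK_isHermitian hKB.1.1 pB),
      ← aux_charpoly_eq_prod (weightedK_isHermitian (hKB.1.1.submatrix Fin.castSucc) pA)]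
    exact hchar
  rw [pVS, pVS]
  by_cases hq1 : q = 1
  · rw [if_pos hq1, if_pos hq1]
    have hsum := aux_sum_transfer _ _ hms (fun x => x * Real.log x) (by simp)
    rw [hsum]
  · rw [if_neg hq1, if_neg hq1]
    have hsum := aux_sum_transfer _ _ hms (fun x => if x ≠ 0 then x ^ q else 0) (by simp)
    rw [Finset.sum_filter, Finset.sum_filter, hsum]
end

section
/- (Boundedness and positivity.) Let K be an N×N similarity matrix and p a probability vector in ℝ^N. Then for every order q ≥ 0, 1 ≤ pVS(K, p, q) ≤ N. -/
open Matrix Finset Real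

lemma my_sum_eig_eq_trace {n : Type*} [Fintype n] [DecidableEq n] {A : Matrix n n ℝ}
    (hA : A.IsHermitian) : ∑ i, hA.eigenvalues i = A.trace := by
  rw [hA.trace_eq_sum_eigenvalues]
  simp

/-- Boundedness and positivity: `1 ≤ pVS(K, p, q) ≤ N`. -/
theorem pVS_bounds {N : ℕ}
    (K : Matrix (Fin N) (Fin N) ℝ) (hK : IsSimilarityMatrix K)
    (p : Fin N → ℝ) (hp : IsProbVec p)
    (q : ℝ) (hq : 0 ≤ q) :
    1 ≤ pVS K p q hK.1.1 ∧ pVS K p q hK.1.1 ≤ N := by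
  have hherm := weightedK_isHermitian hK.1.1 p
  set μ : Fin N → ℝ := (weightedK_isHermitian hK.1.1 p).eigenvalues with hμdef
  have hPSD : (weightedK K p).PosSemidef := by
    have h := hK.1.mul_mul_conjTranspose_same (Matrix.diagonal fun i => Real.sqrt (p i))
    simpa [weightedK, Matrix.diagonal_conjTranspose] using h
  have hμ0 : ∀ i, 0 ≤ μ i := fun i => hPSD.eigenvalues_nonneg i
  have htr : (weightedK K p).trace = 1 := by
    simp only [weightedK, Matrix.trace, Matrix.diag, Matrix.mul_diagonal, Matrix.diagonal_mul]
    have h1 : ∀ i, Real.sqrt (p i) * K i i * Real.sqrt (p i) = p i := fun i => by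
      rw [hK.2 i, mul_one, Real.mul_self_sqrt (hp.1 i)]
    simp only [h1]; exact hp.2
  have hμs : ∑ i, μ i = 1 := by rw [hμdef, my_sum_eig_eq_trace]; exact htr
  have hμ1 : ∀ i, μ i ≤ 1 := fun i => by
    rw [← hμs]; exact Finset.single_le_sum (fun j _ => hμ0 j) (mem_univ i)
  set s : Finset (Fin N) := Finset.univ.filter (fun i => μ i ≠ 0) with hsdef
  have hssum : ∑ i ∈ s, μ i = 1 := by
    rw [hsdef, Finset.sum_filter_ne_zero]; exact hμs
  have hspos : ∀ i ∈ s, 0 < μ i := fun i hi => by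
    have : μ i ≠ 0 := (Finset.mem_filter.mp hi).2
    exact lt_of_le_of_ne (hμ0 i) (Ne.symm this)
  have hsne : s.Nonempty := by
    rw [Finset.nonempty_iff_ne_empty]
    intro h; rw [h, Finset.sum_empty] at hssum; norm_num at hssum
  have hm1 : 1 ≤ s.card := Finset.card_pos.mpr hsne
  have hmN : s.card ≤ N := by
    calc s.card ≤ (Finset.univ : Finset (Fin N)).card := Finset.card_le_card (Finset.filter_subset _ _)
    _ = N := by simp
  have hN1 : 1 ≤ N := le_trans hm1 hmN
  have hmr : (0:ℝ) < s.card := by exact_mod_cast hm1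
  have hNr : (0:ℝ) < N := by exact_mod_cast lt_of_lt_of_le Nat.zero_lt_one hN1
  have hmNr : (s.card : ℝ) ≤ N := by exact_mod_cast hmN
  by_cases hq1 : q = 1
  · -- Shannon case
    rw [pVS, if_pos hq1]
    have hterm : ∀ i, μ i * Real.log (μ i) ≤ 0 := fun i =>
      Real.mul_log_nonpos (hμ0 i) (hμ1 i)
    constructor
    · apply Real.one_le_exp
      simp only [neg_nonneg]
      exact Finset.sum_nonpos (fun i _ => hterm i)
    · -- entropy ≤ log N
      have hH : - ∑ i, μ i * Real.log (μ i) = ∑ i ∈ s, μ i • Real.log (μ i)⁻¹ := by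
        rw [show (∑ i, μ i * Real.log (μ i)) = ∑ i ∈ s, μ i * Real.log (μ i) from
          (Finset.sum_filter_of_ne (fun i _ h => by
            intro h0; rw [h0] at h; simp at h)).symm]
        rw [← Finset.sum_neg_distrib]
        refine Finset.sum_congr rfl (fun i hi => ?_)
        rw [Real.log_inv, smul_eq_mul]; ring
      have hjen := (strictConcaveOn_log_Ioi.concaveOn).le_map_sum
        (t := s) (w := μ) (p := fun i => (μ i)⁻¹)
        (fun i hi => hμ0 i) hssum
        (fun i hi => Set.mem_Ioi.mpr (inv_pos.mpr (hspos i hi)))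
      have hsum1 : ∑ i ∈ s, μ i • (μ i)⁻¹ = (s.card : ℝ) := by
        rw [show ∑ i ∈ s, μ i • (μ i)⁻¹ = ∑ i ∈ s, (1:ℝ) from
          Finset.sum_congr rfl (fun i hi => by
            rw [smul_eq_mul, mul_inv_cancel₀ (ne_of_gt (hspos i hi))])]
        simp
      rw [hsum1] at hjen
      rw [hH]
      calc Real.exp (∑ i ∈ s, μ i • Real.log (μ i)⁻¹)
          ≤ Real.exp (Real.log (N : ℝ)) :=
            Real.exp_le_exp.mpr (le_trans hjen (Real.log_le_log hmr hmNr))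
        _ = (N : ℝ) := Real.exp_log hNr
  · rw [pVS, if_neg hq1, ← hμdef, ← hsdef]
    have hSpos : 0 < ∑ i ∈ s, μ i ^ q :=
      Finset.sum_pos (fun i hi => Real.rpow_pos_of_pos (hspos i hi) q) hsne
    set S : ℝ := ∑ i ∈ s, μ i ^ q with hSdef
    have hwsum : ∑ _i ∈ s, ((s.card : ℝ))⁻¹ = 1 := by
      rw [Finset.sum_const, nsmul_eq_mul, mul_inv_cancel₀ hmr.ne']
    have hmpow : ∀ r : ℝ, (s.card : ℝ) * ((s.card : ℝ))⁻¹ ^ r = (s.card : ℝ) ^ (1 - r) := by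
      intro r
      rw [Real.inv_rpow hmr.le, Real.rpow_sub hmr, Real.rpow_one, div_eq_mul_inv]
    rcases lt_or_gt_of_ne hq1 with hlt | hgt
    · -- q < 1
      have h1q : 0 < 1 - q := by linarith
      have he : 0 ≤ 1 / (1 - q) := by positivity
      have hS1 : 1 ≤ S := by
        rw [← hssum]
        apply Finset.sum_le_sum
        intro i hi
        calc μ i = μ i ^ (1:ℝ) := (Real.rpow_one _).symm
          _ ≤ μ i ^ q := Real.rpow_le_rpow_of_exponent_ge (hspos i hi) (hμ1 i) hlt.le
      have hSle : S ≤ (s.card : ℝ) ^ (1 - q) := by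
        rcases eq_or_lt_of_le hq with hq0 | hq0
        · have : S = (s.card : ℝ) := by
            rw [hSdef, show ∑ i ∈ s, μ i ^ q = ∑ i ∈ s, (1:ℝ) from
              Finset.sum_congr rfl (fun i hi => by rw [← hq0, Real.rpow_zero])]
            simp
          rw [this, ← hq0, sub_zero, Real.rpow_one]
        · have hinv : 1 ≤ 1 / q := (le_div_iff₀ hq0).mpr (by linarith)
          have hkey := Real.arith_mean_le_rpow_mean s (fun _ => ((s.card : ℝ))⁻¹)
            (fun i => μ i ^ q) (fun i _ => by positivity) hwsum
            (fun i _ => Real.rpow_nonneg (hμ0 i) q) hinv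
          have hz : ∀ i ∈ s, (μ i ^ q) ^ (1/q : ℝ) = μ i := fun i hi => by
            rw [← Real.rpow_mul (hμ0 i), mul_one_div_cancel hq0.ne', Real.rpow_one]
          have hkey2 : ((s.card : ℝ))⁻¹ * S ≤ ((s.card : ℝ))⁻¹ ^ q := by
            calc ((s.card : ℝ))⁻¹ * S = ∑ i ∈ s, ((s.card : ℝ))⁻¹ * μ i ^ q :=
                  Finset.mul_sum _ _ _
              _ ≤ (∑ i ∈ s, ((s.card : ℝ))⁻¹ * (μ i ^ q) ^ (1/q : ℝ)) ^ (1/(1/q) : ℝ) := hkey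
              _ = ((s.card : ℝ))⁻¹ ^ q := by
                  rw [Finset.sum_congr rfl (fun i hi => by rw [hz i hi]), ← Finset.mul_sum,
                    hssum, mul_one, one_div_one_div]
          calc S = (s.card : ℝ) * (((s.card : ℝ))⁻¹ * S) := by
                field_simp
            _ ≤ (s.card : ℝ) * ((s.card : ℝ))⁻¹ ^ q := by
                apply mul_le_mul_of_nonneg_left hkey2 hmr.le
            _ = (s.card : ℝ) ^ (1 - q) := hmpow q
      have hSle2 : S ≤ (N : ℝ) ^ (1 - q) :=
        hSle.trans (Real.rpow_le_rpow hmr.le hmNr h1q.le)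
      constructor
      · calc (1:ℝ) = (1:ℝ) ^ (1/(1-q)) := (Real.one_rpow _).symm
          _ ≤ S ^ (1/(1-q)) := Real.rpow_le_rpow zero_le_one hS1 he
      · calc S ^ (1/(1-q)) ≤ ((N:ℝ) ^ (1-q)) ^ (1/(1-q)) :=
              Real.rpow_le_rpow hSpos.le hSle2 he
          _ = (N:ℝ) := by
              rw [← Real.rpow_mul hNr.le, mul_one_div_cancel h1q.ne', Real.rpow_one]
    · -- q > 1
      have h1q : 1 - q < 0 := by linarith
      have he : 1 / (1 - q) < 0 := div_neg_of_pos_of_neg one_pos h1q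
      have hSle1 : S ≤ 1 := by
        rw [← hssum]
        apply Finset.sum_le_sum
        intro i hi
        calc μ i ^ q ≤ μ i ^ (1:ℝ) :=
              Real.rpow_le_rpow_of_exponent_ge (hspos i hi) (hμ1 i) hgt.le
          _ = μ i := Real.rpow_one _
      have hSge : (s.card : ℝ) ^ (1 - q) ≤ S := by
        have hkey := Real.rpow_arith_mean_le_arith_mean_rpow s (fun _ => ((s.card : ℝ))⁻¹)
          μ (fun i _ => by positivity) hwsum (fun i _ => hμ0 i) hgt.le
        have hkey2 : ((s.card : ℝ))⁻¹ ^ q ≤ ((s.card : ℝ))⁻¹ * S := by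
          calc ((s.card : ℝ))⁻¹ ^ q = (∑ i ∈ s, ((s.card : ℝ))⁻¹ * μ i) ^ q := by
                rw [← Finset.mul_sum, hssum, mul_one]
            _ ≤ ∑ i ∈ s, ((s.card : ℝ))⁻¹ * μ i ^ q := hkey
            _ = ((s.card : ℝ))⁻¹ * S := (Finset.mul_sum _ _ _).symm
        calc (s.card : ℝ) ^ (1 - q) = (s.card : ℝ) * ((s.card : ℝ))⁻¹ ^ q := (hmpow q).symm
          _ ≤ (s.card : ℝ) * (((s.card : ℝ))⁻¹ * S) :=
              mul_le_mul_of_nonneg_left hkey2 hmr.le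
          _ = S := by field_simp
      have hSge2 : (N : ℝ) ^ (1 - q) ≤ S :=
        le_trans (Real.rpow_le_rpow_of_nonpos hmr hmNr h1q.le) hSge
      have hN1q : (0:ℝ) < (N:ℝ) ^ (1-q) := Real.rpow_pos_of_pos hNr _
      constructor
      · exact Real.one_le_rpow_of_pos_of_le_one_of_nonpos hSpos hSle1 he.le
      · calc S ^ (1/(1-q)) ≤ ((N:ℝ) ^ (1-q)) ^ (1/(1-q)) :=
              Real.rpow_le_rpow_of_nonpos hN1q hSge2 he.le
          _ = (N:ℝ) := by
              rw [← Real.rpow_mul hNr.le, mul_one_div_cancel h1q.ne, Real.rpow_one]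
end
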